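/- Let h ≥ 1, let X ⊆ B^h be nonempty, let G = Q_h(X), and let x̂ = ∧_{x∈\widehat X} x (the bitwise AND of all maximal elements of X). Then a vertex v of G is a minimal vertex of G if and only if v ∈ ∩_{x∈\widehat X} I_G(0^h, x); moreover ∩_{x∈\widehat X} I_G(0^h, x) = I_G(0^h, x̂) = {v ∈ B^h : v ≤ x̂}. In particular, v is a minimal vertex of G if and only if v ≤ x̂. -/

import Mathlib

open SimpleGraph

/-- The hypercube `Q_h` on binary words of length `h`: two words are adjacent
iff their Hamming distance is `1`. -/
def Qcube (h : ℕ) : SimpleGraph (Fin h → Bool) where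
  Adj u v := hammingDist u v = 1
  symm := ⟨fun (u v : Fin h → Bool) (huv : hammingDist u v = 1) => (show hammingDist v u = 1 by rwa [hammingDist_comm])⟩
  loopless := ⟨fun (u : Fin h → Bool) (hu : hammingDist u u = 1) => by rw [hammingDist_self] at hu; exact absurd hu (by norm_num)⟩

/-- Vertex set of the daisy cube `Q_h(X)`: all words below some element of `X`. -/
def daisyVerts {h : ℕ} (X : Set (Fin h → Bool)) : Set (Fin h → Bool) :=
  {v | ∃ x ∈ X, v ≤ x}

/-- The daisy cube `Q_h(X)`, the subgraph of `Q_h` induced by `daisyVerts X`. -/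
def daisyGraph {h : ℕ} (X : Set (Fin h → Bool)) : SimpleGraph (daisyVerts X) :=
  SimpleGraph.induce (daisyVerts X) (Qcube h)

/-- `\widehat X`: the set of maximal elements of the poset `(X, ≤)`. -/
def maxSet {h : ℕ} (X : Set (Fin h → Bool)) : Set (Fin h → Bool) :=
  {x ∈ X | ∀ y ∈ X, x ≤ y → x = y}

/-- The all-zeros word `0^h`. -/
def zeroW (h : ℕ) : Fin h → Bool := fun _ => false

/-- Bitwise XOR of words. -/
def xorW {h : ℕ} (u v : Fin h → Bool) : Fin h → Bool := fun i => xor (u i) (v i)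

/-- Bitwise AND of words. -/
def andW {h : ℕ} (u v : Fin h → Bool) : Fin h → Bool := fun i => u i && v i

/-- The weight `w(u)`: the number of ones of a word. -/
def weightW {h : ℕ} (u : Fin h → Bool) : ℕ :=
  (Finset.univ.filter fun i => u i = true).card

/-- The interval `I_G(u,v)`: vertices lying on shortest `u,v`-paths. -/
def gInterval {V : Type*} (G : SimpleGraph V) (u v : V) : Set V :=
  {w | G.dist u w + G.dist w v = G.dist u v}

/-- `N^u(v)`: neighbors of `v` that are closer to `u` than `v` is. -/
def lowerNbrs {V : Type*} (G : SimpleGraph V) (u v : V) : Set V :=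
  {z | G.Adj v z ∧ G.dist u z + 1 = G.dist u v}

/-- `α` is an isometric embedding of `G` into `Q_h`. -/
def IsIsomEmb {V : Type*} (G : SimpleGraph V) {h : ℕ} (α : V → Fin h → Bool) : Prop :=
  ∀ a b, hammingDist (α a) (α b) = G.dist a b

/-- `α` is a proper embedding of `G` into `Q_h`: an isometric embedding such that
`G` is isomorphic to the daisy cube generated by the image of `α`. -/
def IsProperEmb {V : Type*} (G : SimpleGraph V) {h : ℕ} (α : V → Fin h → Bool) : Prop :=
  IsIsomEmb G α ∧ Nonempty (G ≃g daisyGraph (Set.range α))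

/-- `v` is a minimal vertex of `G`: some proper embedding sends `v` to `0^h`. -/
def IsMinVertex {V : Type*} (G : SimpleGraph V) (h : ℕ) (v : V) : Prop :=
  ∃ α : V → Fin h → Bool, IsProperEmb G α ∧ α v = zeroW h

/-- The labeling conditions of Proposition `cubes`/Lemma `partial`: `α v = 0^h`,
the neighbors of `v` get pairwise distinct weight-one labels, and every other
vertex gets the bitwise OR of the labels of its down-neighbors. -/
def goodLabeling {V : Type*} (G : SimpleGraph V) {h : ℕ} (v : V)
    (α : V → Fin h → Bool) : Prop :=
  α v = zeroW h ∧
  Set.InjOn α (G.neighborSet v) ∧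
  (∀ z ∈ G.neighborSet v, weightW (α z) = 1) ∧
  (∀ u ∉ insert v (G.neighborSet v),
    ∀ i, α u i = true ↔ ∃ z ∈ lowerNbrs G v u, α z i = true)


section DaisyAux
open Finset
variable {h : ℕ} {X : Set (Fin h → Bool)}

lemma hamming_eq_sum (u w : Fin h → Bool) :
    hammingDist u w = ∑ i, if u i = w i then 0 else 1 := by
  rw [hammingDist, Finset.card_filter]
  exact Finset.sum_congr rfl fun i _ => by by_cases hi : u i = w i <;> simp [hi]

lemma hbtw_iff (a b c : Fin h → Bool) :
    hammingDist a b + hammingDist b c = hammingDist a c ↔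
      ∀ i, a i = c i → b i = a i := by
  rw [hamming_eq_sum, hamming_eq_sum, hamming_eq_sum, ← Finset.sum_add_distrib, eq_comm,
    Finset.sum_eq_sum_iff_of_le (fun i _ => by cases a i <;> cases b i <;> cases c i <;> simp)]
  constructor
  · intro H i hac
    have := H i (Finset.mem_univ i)
    cases hb : b i <;> cases ha : a i <;> simp_all
  · intro H i _
    by_cases hac : a i = c i
    · rw [H i hac]; simp [hac]
    · cases ha : a i <;> cases hb : b i <;> cases hc : c i <;> simp_all

lemma daisy_adj (u w : daisyVerts X) :
    (daisyGraph X).Adj u w ↔ hammingDist (u : Fin h → Bool) w = 1 := Iff.rfl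

lemma mem_daisy_of_le {u w : Fin h → Bool} (hu : u ∈ daisyVerts X) (hw : w ≤ u) :
    w ∈ daisyVerts X := by
  obtain ⟨x, hx, hux⟩ := hu; exact ⟨x, hx, le_trans hw hux⟩

lemma update_hamming_one {u w : Fin h → Bool} {i : Fin h} (hi : u i ≠ w i) :
    hammingDist u (Function.update u i (w i)) = 1 := by
  rw [hammingDist]
  convert Finset.card_singleton i
  ext j
  rcases eq_or_ne j i with rfl | hj <;> simp [Function.update_apply, *]

lemma update_hamming_succ {u w : Fin h → Bool} {i : Fin h} (hi : u i ≠ w i) :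
    hammingDist (Function.update u i (w i)) w + 1 = hammingDist u w := by
  rw [hammingDist, hammingDist]
  have : (Finset.filter (fun j => Function.update u i (w i) j ≠ w j) Finset.univ)
      = (Finset.filter (fun j => u j ≠ w j) Finset.univ).erase i := by
    ext j
    rcases eq_or_ne j i with rfl | hj <;> simp [Function.update_apply, *]
  rw [this, Finset.card_erase_add_one (by simp [hi])]

lemma exists_walk (u w : daisyVerts X) :
    ∃ p : (daisyGraph X).Walk u w, p.length = hammingDist (u : Fin h → Bool) w := by
  generalize hn : hammingDist (u : Fin h → Bool) w = n
  induction n generalizing u with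
  | zero =>
    have : (u : Fin h → Bool) = w := hammingDist_eq_zero.mp hn
    have : u = w := Subtype.ext this
    subst this
    exact ⟨SimpleGraph.Walk.nil, rfl⟩
  | succ n ih =>
    have hne : (u : Fin h → Bool) ≠ w := by
      intro hh'; rw [hh'] at hn; simp at hn
    obtain ⟨i, hi, hmem⟩ :
        ∃ i, (u : Fin h → Bool) i ≠ (w : Fin h → Bool) i ∧
          Function.update (u : Fin h → Bool) i ((w : Fin h → Bool) i) ∈ daisyVerts X := by
      by_cases hcase : ∃ i, (u : Fin h → Bool) i = true ∧ (w : Fin h → Bool) i = false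
      · obtain ⟨i, h1, h2⟩ := hcase
        refine ⟨i, by simp [h1, h2], mem_daisy_of_le u.2 ?_⟩
        intro j
        rcases eq_or_ne j i with rfl | hj <;> simp [Function.update_apply, *]
      · push_neg at hcase
        have hle : (u : Fin h → Bool) ≤ w := by
          intro j
          cases hju : (u : Fin h → Bool) j with
          | false => simp
          | true =>
            have hwj := hcase j hju
            cases hw : (w : Fin h → Bool) j
            · exact absurd hw hwj
            · simp [hju, hw]
        obtain ⟨i, hi⟩ := Function.ne_iff.mp hne
        refine ⟨i, hi, mem_daisy_of_le w.2 ?_⟩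
        intro j
        rcases eq_or_ne j i with rfl | hj <;> simp [Function.update_apply, *]
        exact hle j
    set u' : daisyVerts X := ⟨Function.update (u : Fin h → Bool) i ((w : Fin h → Bool) i), hmem⟩
    have hadj : (daisyGraph X).Adj u u' := (daisy_adj u u').mpr (update_hamming_one hi)
    have hstep : hammingDist (u' : Fin h → Bool) w = n := by
      have h2 := update_hamming_succ (w := (w : Fin h → Bool)) hi
      have h3 : (u' : Fin h → Bool) = Function.update (u : Fin h → Bool) i ((w : Fin h → Bool) i) := rfl
      rw [h3]
      omega
    obtain ⟨p, hp⟩ := ih u' hstep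
    exact ⟨SimpleGraph.Walk.cons hadj p, by simp [hp, hstep, hn]⟩

lemma hamming_le_length {u w : daisyVerts X} (p : (daisyGraph X).Walk u w) :
    hammingDist (u : Fin h → Bool) w ≤ p.length := by
  induction p with
  | nil => simp
  | @cons a b c hadj p ih =>
    have h1 : hammingDist (a : Fin h → Bool) (c : Fin h → Bool) ≤
        hammingDist (a : Fin h → Bool) (b : Fin h → Bool) +
        hammingDist (b : Fin h → Bool) (c : Fin h → Bool) := hammingDist_triangle _ _ _
    rw [daisy_adj] at hadj
    simp only [SimpleGraph.Walk.length_cons]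
    omega

lemma daisy_dist (u w : daisyVerts X) :
    (daisyGraph X).dist u w = hammingDist (u : Fin h → Bool) w := by
  obtain ⟨p, hp⟩ := exists_walk u w
  refine le_antisymm (hp ▸ SimpleGraph.dist_le p) ?_
  obtain ⟨q, hq⟩ := SimpleGraph.Reachable.exists_walk_length_eq_dist ⟨p⟩
  exact hq ▸ hamming_le_length q

lemma interval_iff {z : daisyVerts X} (hz : (z : Fin h → Bool) = zeroW h)
    (w x : daisyVerts X) :
    w ∈ gInterval (daisyGraph X) z x ↔ (w : Fin h → Bool) ≤ (x : Fin h → Bool) := by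
  show _ = _ ↔ _
  rw [daisy_dist, daisy_dist, daisy_dist, hbtw_iff, hz]
  constructor
  · intro H i
    cases hx : (x : Fin h → Bool) i with
    | true => simp
    | false =>
      have := H i (by rw [hx]; rfl)
      rw [this]
      exact le_rfl
  · intro H i hi
    have hwx := H i
    rw [← hi] at hwx
    cases hww : (w : Fin h → Bool) i with
    | false => rfl
    | true => rw [hww] at hwx; exact absurd hwx (by simp [zeroW])

lemma exists_maximal_ge {x : Fin h → Bool} (hx : x ∈ X) : ∃ m ∈ maxSet X, x ≤ m := by
  obtain ⟨m, hm, hmax⟩ := Set.Finite.exists_maximalFor id {y ∈ X | x ≤ y}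
    (Set.toFinite _) ⟨x, hx, le_refl x⟩
  exact ⟨m, ⟨hm.1, fun y hy hmy => le_antisymm hmy (hmax ⟨hy, le_trans hm.2 hmy⟩ hmy)⟩, hm.2⟩

lemma xorW_xorW (u v : Fin h → Bool) : xorW (xorW u v) v = u :=
  funext fun i => by simp [xorW]

lemma hamming_xor (u w v : Fin h → Bool) :
    hammingDist (xorW u v) (xorW w v) = hammingDist u w := by
  rw [hammingDist, hammingDist]
  refine congrArg Finset.card (Finset.filter_congr fun i _ => ?_)
  simp only [xorW]
  cases u i <;> cases w i <;> cases v i <;> simp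

lemma card_pattern (p : Fin h → Prop) [DecidablePred p] (g : Fin h → Bool) :
    Fintype.card {w : Fin h → Bool // ∀ i, p i → w i = g i} =
      2 ^ Fintype.card {i // ¬ p i} := by
  have e : {w : Fin h → Bool // ∀ i, p i → w i = g i} ≃ ({i // ¬ p i} → Bool) :=
    { toFun := fun w j => w.1 j.1
      invFun := fun f => ⟨fun i => if hp : p i then g i else f ⟨i, hp⟩,
        fun i hi => dif_pos hi⟩
      left_inv := fun w => by
        apply Subtype.ext
        funext i
        by_cases hp : p i
        · simp [hp, w.2 i hp]
        · simp [hp]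
      right_inv := fun f => by
        funext j
        simp [j.2] }
  rw [Fintype.card_congr e, Fintype.card_fun, Fintype.card_bool]

end DaisyAux

section DaisyMain
open Finset
variable {h : ℕ} {X : Set (Fin h → Bool)}

lemma min_of_le (v : daisyVerts X)
    (hv : ∀ i, (v : Fin h → Bool) i = true → ∀ x ∈ maxSet X, x i = true) :
    IsMinVertex (daisyGraph X) h v := by
  classical
  set α : daisyVerts X → Fin h → Bool :=
    fun u => xorW (u : Fin h → Bool) (v : Fin h → Bool) with hα
  have hiso : IsIsomEmb (daisyGraph X) α := by
    intro a b
    rw [hα]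
    simp only
    rw [hamming_xor, daisy_dist]
  have hdown : ∀ w', w' ∈ daisyVerts (Set.range α) →
      xorW w' (v : Fin h → Bool) ∈ daisyVerts X := by
    rintro w' ⟨y, ⟨u, rfl⟩, hle⟩
    obtain ⟨x0, hx0, hux0⟩ := u.2
    obtain ⟨m, hm, hx0m⟩ := exists_maximal_ge hx0
    refine ⟨m, hm.1, fun i => ?_⟩
    cases hvi : (v : Fin h → Bool) i with
    | true =>
      have := hv i hvi m hm
      simp [this]
    | false =>
      have h1 := hle i
      simp only [xorW, hα, hvi, Bool.xor_false] at h1 ⊢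
      exact le_trans h1 (le_trans (hux0 i) (hx0m i))
  have hmem : ∀ u : daisyVerts X, α u ∈ daisyVerts (Set.range α) :=
    fun u => ⟨α u, ⟨u, rfl⟩, le_refl _⟩
  let e : daisyVerts X ≃ daisyVerts (Set.range α) :=
    { toFun := fun u => ⟨α u, hmem u⟩
      invFun := fun w => ⟨xorW (w : Fin h → Bool) (v : Fin h → Bool), hdown _ w.2⟩
      left_inv := fun u => Subtype.ext (xorW_xorW _ _)
      right_inv := fun w => Subtype.ext (xorW_xorW _ _) }
  have iso : daisyGraph X ≃g daisyGraph (Set.range α) :=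
    { e with
      map_rel_iff' := by
        intro a b
        rw [daisy_adj, daisy_adj]
        show hammingDist (α a) (α b) = 1 ↔ _
        rw [hα]
        simp only
        rw [hamming_xor] }
  refine ⟨α, ⟨hiso, ⟨iso⟩⟩, ?_⟩
  funext i
  simp [hα, xorW, zeroW]

lemma le_of_min (v : daisyVerts X) (hmin : IsMinVertex (daisyGraph X) h v)
    {m : Fin h → Bool} (hm : m ∈ maxSet X) : (v : Fin h → Bool) ≤ m := by
  classical
  obtain ⟨α, ⟨hiso, ⟨iso⟩⟩, hα0⟩ := hmin
  have hinj : Function.Injective α := by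
    intro a b hab
    have h1 := hiso a b
    rw [hab, hammingDist_self, daisy_dist] at h1
    exact Subtype.ext (hammingDist_eq_zero.mp h1.symm)
  -- the range of α is downward closed
  have hYeq : Set.range α = daisyVerts (Set.range α) := by
    apply Set.eq_of_subset_of_ncard_le
    · exact fun y hy => ⟨y, hy, le_refl y⟩
    · have c1 : Nat.card (Set.range α) = Nat.card (daisyVerts X) :=
        Nat.card_congr (Equiv.ofInjective α hinj).symm
      have c2 : Nat.card (daisyVerts X) = Nat.card (daisyVerts (Set.range α)) :=
        Nat.card_congr iso.toEquiv
      rw [← Nat.card_coe_set_eq, ← Nat.card_coe_set_eq, c1, c2]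
    · exact Set.toFinite _
  have hmv : m ∈ daisyVerts X := ⟨m, hm.1, le_refl m⟩
  set mv : daisyVerts X := ⟨m, hmv⟩
  set y : Fin h → Bool := α mv with hy
  have hwy : hammingDist (zeroW h) y = hammingDist (v : Fin h → Bool) m := by
    have := hiso v mv
    rw [hα0, daisy_dist] at this
    exact this
  -- preimages of elements below y
  have hpre : ∀ e : Fin h → Bool, e ≤ y → ∃ u : daisyVerts X, α u = e := by
    intro e he
    have : e ∈ daisyVerts (Set.range α) := ⟨y, ⟨mv, rfl⟩, he⟩
    rw [← hYeq] at this
    exact this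
  -- the two patterned sets
  set S := {e : Fin h → Bool // ∀ i, y i = false → e i = zeroW h i}
  set T := {w : Fin h → Bool // ∀ i, (v : Fin h → Bool) i = m i → w i = (v : Fin h → Bool) i}
  have hSle : ∀ e : S, e.1 ≤ y := by
    intro e i
    show e.1 i ≤ y i
    cases hyi : y i with
    | false => rw [e.2 i hyi]; exact le_rfl
    | true => exact Bool.le_true _
  -- the injection Φ : S → T
  have hΦ : ∀ e : S, ∃ u : daisyVerts X, α u = e.1 := fun e => hpre e.1 (hSle e)
  let Φ : S → T := fun e =>
    ⟨((hΦ e).choose : daisyVerts X), by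
      intro i hi
      set u := (hΦ e).choose with hu
      have hue : α u = e.1 := (hΦ e).choose_spec
      have hb : hammingDist (v : Fin h → Bool) (u : Fin h → Bool) +
          hammingDist (u : Fin h → Bool) m = hammingDist (v : Fin h → Bool) m := by
        have d1 : hammingDist (v : Fin h → Bool) (u : Fin h → Bool) =
            hammingDist (zeroW h) e.1 := by
          have := hiso v u
          rw [hα0, hue, daisy_dist] at this
          exact this.symm
        have d2 : hammingDist (u : Fin h → Bool) m = hammingDist e.1 y := by
          have := hiso u mv
          rw [hue, daisy_dist] at this
          exact this.symm
        rw [d1, d2, ← hwy]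
        rw [hbtw_iff]
        exact fun j hj => e.2 j (by rw [← hj]; rfl)
      exact (hbtw_iff _ _ _).mp hb i hi⟩
  have hΦinj : Function.Injective Φ := by
    intro e e' hee
    have h0 : (Φ e).1 = (Φ e').1 := congrArg Subtype.val hee
    have h1 : ((hΦ e).choose : daisyVerts X) = (hΦ e').choose := Subtype.ext h0
    apply Subtype.ext
    rw [← (hΦ e).choose_spec, ← (hΦ e').choose_spec, h1]
  have hcard : Fintype.card S = Fintype.card T := by
    rw [card_pattern (fun i => y i = false) (zeroW h),
      card_pattern (fun i => (v : Fin h → Bool) i = m i) (v : Fin h → Bool)]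
    congr 1
    rw [Fintype.card_subtype, Fintype.card_subtype]
    have e1 : (Finset.filter (fun i => ¬ y i = false) Finset.univ).card
        = hammingDist (zeroW h) y := by
      rw [hammingDist]
      refine congrArg Finset.card (Finset.filter_congr fun i _ => ?_)
      rw [show zeroW h i = false from rfl]
      exact not_congr eq_comm
    have e2 : (Finset.filter (fun i => ¬ (v : Fin h → Bool) i = m i) Finset.univ).card
        = hammingDist (v : Fin h → Bool) m := by
      rw [hammingDist]
    rw [e1, e2, hwy]
  have hΦsurj : Function.Surjective Φ :=
    ((Fintype.bijective_iff_injective_and_card Φ).mpr ⟨hΦinj, hcard⟩).2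
  -- apply surjectivity to v ⊔ m
  have hsupT : (fun i => (v : Fin h → Bool) i || m i) ∈
      {w : Fin h → Bool | ∀ i, (v : Fin h → Bool) i = m i → w i = (v : Fin h → Bool) i} := by
    intro i hi
    show ((v : Fin h → Bool) i || m i) = (v : Fin h → Bool) i
    rw [← hi]
    exact Bool.or_self _
  obtain ⟨e, he⟩ := hΦsurj ⟨fun i => (v : Fin h → Bool) i || m i, hsupT⟩
  have hsup_mem : (fun i => (v : Fin h → Bool) i || m i) ∈ daisyVerts X := by
    have := ((hΦ e).choose : daisyVerts X).2
    have heq : ((hΦ e).choose : daisyVerts X).1 = fun i => (v : Fin h → Bool) i || m i :=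
      congrArg Subtype.val he
    rwa [heq] at this
  obtain ⟨x, hx, hsx⟩ := hsup_mem
  have hmx : m ≤ x := by
    intro i
    refine le_trans ?_ (hsx i)
    show m i ≤ ((v : Fin h → Bool) i || m i)
    cases hvv : (v : Fin h → Bool) i
    · rw [Bool.false_or]
    · rw [Bool.true_or]; exact Bool.le_true _
  have hxm : m = x := hm.2 x hx hmx
  intro i
  have h6 : ((v : Fin h → Bool) i || m i) ≤ m i := by
    have h7 := hsx i
    rw [← hxm] at h7
    exact h7
  refine le_trans ?_ h6
  cases hmm : m i
  · rw [Bool.or_false]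
  · rw [Bool.or_true]; exact Bool.le_true _

end DaisyMain

/-- Let `x̂` be the bitwise AND of all maximal elements of `X`.
A vertex `v` of the daisy cube `G = Q_h(X)` is a minimal vertex iff it lies in all
intervals `I_G(0^h, x)` for maximal `x`; moreover this intersection equals
`I_G(0^h, x̂) = {w : w ≤ x̂}`, so `v` is minimal iff `v ≤ x̂`. -/
theorem stmt_4 (h : ℕ) (hh : 1 ≤ h) (X : Set (Fin h → Bool)) (hX : X.Nonempty)
    (z : daisyVerts X) (hz : (z : Fin h → Bool) = zeroW h)
    (xh : daisyVerts X)
    (hxh : ∀ i, (xh : Fin h → Bool) i = true ↔ ∀ x ∈ maxSet X, x i = true) :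
    (∀ v : daisyVerts X, IsMinVertex (daisyGraph X) h v ↔
      ∀ x : daisyVerts X, (x : Fin h → Bool) ∈ maxSet X →
        v ∈ gInterval (daisyGraph X) z x) ∧
    (∀ w : daisyVerts X,
      (∀ x : daisyVerts X, (x : Fin h → Bool) ∈ maxSet X →
        w ∈ gInterval (daisyGraph X) z x) ↔ w ∈ gInterval (daisyGraph X) z xh) ∧
    (∀ w : daisyVerts X, w ∈ gInterval (daisyGraph X) z xh ↔
      (w : Fin h → Bool) ≤ (xh : Fin h → Bool)) ∧
    (∀ v : daisyVerts X, IsMinVertex (daisyGraph X) h v ↔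
      (v : Fin h → Bool) ≤ (xh : Fin h → Bool)) := by
  classical
  have bfl : ∀ a : Bool, false ≤ a := by decide
  have btrue : ∀ a : Bool, true ≤ a → a = true := by decide
  have key3 : ∀ w : daisyVerts X, w ∈ gInterval (daisyGraph X) z xh ↔
      (w : Fin h → Bool) ≤ (xh : Fin h → Bool) := fun w => interval_iff hz w xh
  have key2 : ∀ w : daisyVerts X,
      (∀ x : daisyVerts X, (x : Fin h → Bool) ∈ maxSet X →
        w ∈ gInterval (daisyGraph X) z x) ↔
      (w : Fin h → Bool) ≤ (xh : Fin h → Bool) := by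
    intro w
    constructor
    · intro H i
      cases hwi : (w : Fin h → Bool) i with
      | false => exact bfl _
      | true =>
        have hxi : (xh : Fin h → Bool) i = true := by
          rw [hxh i]
          intro x hx
          have hxd : x ∈ daisyVerts X := ⟨x, hx.1, le_refl x⟩
          have h1 := (interval_iff hz w ⟨x, hxd⟩).mp (H ⟨x, hxd⟩ hx) i
          rw [hwi] at h1
          exact btrue _ h1
        rw [hxi]
    · intro H x hx
      rw [interval_iff hz]
      intro i
      refine le_trans (H i) ?_
      cases hxi : (xh : Fin h → Bool) i with
      | false => exact bfl _
      | true =>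
        rw [(hxh i).mp hxi (x : Fin h → Bool) hx]
  have key4 : ∀ v : daisyVerts X, IsMinVertex (daisyGraph X) h v ↔
      (v : Fin h → Bool) ≤ (xh : Fin h → Bool) := by
    intro v
    constructor
    · intro hmin i
      cases hvi : (v : Fin h → Bool) i with
      | false => exact bfl _
      | true =>
        have hxi : (xh : Fin h → Bool) i = true := by
          rw [hxh i]
          intro x hx
          have h1 := le_of_min v hmin hx i
          rw [hvi] at h1
          exact btrue _ h1
        rw [hxi]
    · intro hle
      apply min_of_le
      intro i hvi x hx
      have h1 := hle i
      rw [hvi] at h1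
      exact (hxh i).mp (btrue _ h1) x hx
  exact ⟨fun v => (key4 v).trans (key2 v).symm,
    fun w => (key2 w).trans (key3 w).symm, key3, key4⟩
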